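/- arXiv:2107.14227 — 2 statements merged into one kernel-verified Lean document; each statement's English description precedes it below -/
import Mathlib

section
/- The general linear group GL(2,ℤ) admits the presentation ⟨u, s, r | s⁴ = 1, r² = 1, r s r⁻¹ = s⁻¹, r u r⁻¹ = u⁻¹, s² = u³⟩. Precisely: the group homomorphism from the free group on three generators u, s, r to GL(2,ℤ) sending s ↦ S, u ↦ U, r ↦ R kills the normal closure of the relators {s⁴, r², rsr⁻¹s, rur⁻¹u, s²u⁻³}, and the induced homomorphism from the presented group on these generators and relators to GL(2,ℤ) is an isomorphism. -/
open Matrix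

/-- `GL(2,ℤ)`: invertible `2 × 2` integer matrices. -/
abbrev GL2Z := Matrix.GeneralLinearGroup (Fin 2) ℤ

/-- The element `S = !![0, -1; 1, 0]` of `GL(2,ℤ)`. -/
def Sgen : GL2Z :=
  ⟨!![0, -1; 1, 0], !![0, 1; -1, 0],
    by norm_num [Matrix.mul_fin_two, Matrix.one_fin_two.symm],
    by norm_num [Matrix.mul_fin_two, Matrix.one_fin_two.symm]⟩

/-- The element `U = !![0, -1; 1, 1]` of `GL(2,ℤ)`. -/
def Ugen : GL2Z :=
  ⟨!![0, -1; 1, 1], !![1, 1; -1, 0],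
    by norm_num [Matrix.mul_fin_two, Matrix.one_fin_two.symm],
    by norm_num [Matrix.mul_fin_two, Matrix.one_fin_two.symm]⟩

/-- The element `R = !![0, 1; 1, 0]` of `GL(2,ℤ)`. -/
def Rgen : GL2Z :=
  ⟨!![0, 1; 1, 0], !![0, 1; 1, 0],
    by norm_num [Matrix.mul_fin_two, Matrix.one_fin_two.symm],
    by norm_num [Matrix.mul_fin_two, Matrix.one_fin_two.symm]⟩

/-- Generators: `0 ↦ u`, `1 ↦ s`, `2 ↦ r`. -/
def genMap : Fin 3 → GL2Z := ![Ugen, Sgen, Rgen]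

/-- The relators `{s⁴, r², rsr⁻¹s, rur⁻¹u, s²u⁻³}`. -/
def glRels : Set (FreeGroup (Fin 3)) :=
  {(FreeGroup.of 1) ^ 4,
   (FreeGroup.of 2) ^ 2,
   FreeGroup.of 2 * FreeGroup.of 1 * (FreeGroup.of 2)⁻¹ * FreeGroup.of 1,
   FreeGroup.of 2 * FreeGroup.of 0 * (FreeGroup.of 2)⁻¹ * FreeGroup.of 0,
   (FreeGroup.of 1) ^ 2 * ((FreeGroup.of 0)⁻¹) ^ 3}

/-!
Surjectivity: `SL(2,ℤ)` is generated by `S` and `T = S⁻¹U`, and `R` has determinant `-1`.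

Injectivity: in the presented group `s²` is central, and the relations on `r` show that the
subgroup `N = ⟨u, s⟩` is normal with `N ⊔ ⟨r⟩ = ⊤`; since `r ↦ R` has determinant `-1`, the
kernel lies in `N`. Modulo `⟨s²⟩` the images of `s` and `u` have orders `2` and `3`, and they play
ping-pong on the upper half-plane (`S` sends `Re < 0` into `Re > 0`, while `U` and `U²` send
`Re > 0` into `Re < 0`), so the image of `N` there is the image of `ℤ/2 ∗ ℤ/3`, on which the
Möbius action is faithful. A kernel element therefore lies in `⟨s²⟩ = {1, s²}`, and `s² ↦ -1 ≠ 1`.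
-/

open UpperHalfPlane

lemma eq_one_or_eq_of_mem_zpowers_of_sq_eq_one {G : Type*} [Group G] {g x : G}
    (hg : g ^ 2 = 1) (hx : x ∈ Subgroup.zpowers g) : x = 1 ∨ x = g := by
  obtain ⟨k, rfl⟩ := Subgroup.mem_zpowers_iff.mp hx
  rw [zpow_eq_zpow_emod' k hg]
  rcases Int.emod_two_eq_zero_or_one k with h | h <;> simp [h]

lemma eq_one_or_eq_or_eq_sq_of_mem_zpowers_of_pow_three_eq_one {G : Type*} [Group G] {g x : G}
    (hg : g ^ 3 = 1) (hx : x ∈ Subgroup.zpowers g) : x = 1 ∨ x = g ∨ x = g ^ 2 := by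
  obtain ⟨k, rfl⟩ := Subgroup.mem_zpowers_iff.mp hx
  rw [zpow_eq_zpow_emod' k hg]
  have : k % 3 = 0 ∨ k % 3 = 1 ∨ k % 3 = 2 := by omega
  rcases this with h | h | h <;> simp [h]

lemma Subgroup.normal_zpowers_of_mem_center {G : Type*} [Group G] {z : G}
    (hz : z ∈ Subgroup.center G) : (Subgroup.zpowers z).Normal :=
  ⟨fun _ hn g => by
    rwa [Subgroup.mem_center_iff.mp (Subgroup.zpowers_le.mpr hz hn) g, mul_inv_cancel_right]⟩

namespace GL2Z

lemma Sgen_sq : Sgen ^ 2 = -1 := by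
  ext i j; fin_cases i <;> fin_cases j <;> simp [Sgen, sq]

lemma Rgen_mul_self : Rgen * Rgen = 1 := by
  ext i j; fin_cases i <;> fin_cases j <;> simp [Rgen]

lemma det_Rgen : GeneralLinearGroup.det Rgen = -1 := by
  ext; simp [Rgen]

lemma lift_genMap_eq_one_of_mem_glRels : ∀ w ∈ glRels, FreeGroup.lift genMap w = 1 := by
  simp only [glRels, Set.mem_insert_iff, Set.mem_singleton_iff, forall_eq_or_imp, forall_eq]
  refine ⟨?_, ?_, ?_, ?_, ?_⟩ <;> ext i j <;> fin_cases i <;> fin_cases j <;>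
    simp [genMap, Sgen, Ugen, Rgen, pow_succ]

section Generation

open Matrix.SpecialLinearGroup

lemma toGL_S : toGL ModularGroup.S = Sgen := Units.ext rfl

lemma toGL_T : toGL ModularGroup.T = Sgen⁻¹ * Ugen := by
  rw [eq_inv_mul_iff_mul_eq, ← toGL_S, ← map_mul]
  exact Units.ext <| by simp [coe_GL_coe_matrix, ModularGroup.coe_S, ModularGroup.coe_T, Ugen]

lemma range_toGL_le {H : Subgroup GL2Z} (hS : Sgen ∈ H) (hU : Ugen ∈ H) : toGL.range ≤ H := by
  rw [MonoidHom.range_eq_map, ← SpecialLinearGroup.SL2Z_generators, MonoidHom.map_closure,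
    Subgroup.closure_le, Set.image_pair, toGL_S, toGL_T]
  exact Set.pair_subset hS (mul_mem (inv_mem hS) hU)

lemma mem_range_toGL_of_det_eq_one {g : GL2Z} (hg : GeneralLinearGroup.det g = 1) :
    g ∈ toGL.range :=
  ⟨⟨g, by simpa [Units.ext_iff] using hg⟩, Units.ext rfl⟩

lemma closure_Ugen_Sgen_Rgen : Subgroup.closure {Ugen, Sgen, Rgen} = ⊤ := by
  set H := Subgroup.closure {Ugen, Sgen, Rgen}
  have hSL : toGL.range ≤ H :=
    range_toGL_le (Subgroup.subset_closure (by simp)) (Subgroup.subset_closure (by simp))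
  have hR : Rgen ∈ H := Subgroup.subset_closure (by simp)
  refine (Subgroup.eq_top_iff' H).mpr fun g => ?_
  rcases Int.units_eq_one_or (GeneralLinearGroup.det g) with h | h
  · exact hSL (mem_range_toGL_of_det_eq_one h)
  · rw [← one_mul g, ← Rgen_mul_self, mul_assoc]
    exact mul_mem hR (hSL (mem_range_toGL_of_det_eq_one (by rw [map_mul, det_Rgen, h]; rfl)))

end Generation

/-- Matrices of negative determinant act on `ℍ` through complex conjugation (Mathlib's convention
for `GL(2,ℝ)`), so this is defined on all of `GL(2,ℤ)`. -/
noncomputable def moebius : GL2Z →* Equiv.Perm ℍ :=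
  (MulAction.toPermHom (GL (Fin 2) ℝ) ℍ).comp (GeneralLinearGroup.map (Int.castRingHom ℝ))

lemma moebius_apply (g : GL2Z) (z : ℍ) :
    moebius g z = GeneralLinearGroup.map (Int.castRingHom ℝ) g • z := rfl

lemma moebius_neg_one : moebius (-1) = 1 := by
  have : GeneralLinearGroup.map (Int.castRingHom ℝ) (-1 : GL2Z) = -1 := by
    ext i j; fin_cases i <;> fin_cases j <;> simp
  ext z : 1
  simp [moebius_apply, this]

lemma re_moebius (g : GL2Z) (z : ℍ) :
    (moebius g z).re = (((g 0 0 : ℂ) * z + g 0 1) / ((g 1 0 : ℂ) * z + g 1 1)).re := by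
  rw [moebius_apply, re_smul]
  simp [num, denom]

lemma re_moebius_Sgen (z : ℍ) : (moebius Sgen z).re = -z.re / Complex.normSq z := by
  rw [re_moebius]
  simp [Sgen, Complex.div_re]

lemma re_moebius_Ugen (z : ℍ) :
    (moebius Ugen z).re = -(z.re + 1) / Complex.normSq (z + 1) := by
  rw [re_moebius]
  simp [Ugen, Complex.div_re]

lemma normSq_coe_add_one_pos (z : ℍ) : 0 < Complex.normSq (z + 1) :=
  Complex.normSq_pos.mpr fun h => z.im_ne_zero (by simpa using congrArg Complex.im h)

lemma re_moebius_Sgen_pos {z : ℍ} (hz : z.re < 0) : 0 < (moebius Sgen z).re := by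
  rw [re_moebius_Sgen]
  exact div_pos (neg_pos.mpr hz) (Complex.normSq_pos.mpr (ne_zero z))

lemma re_moebius_Ugen_neg {z : ℍ} (hz : -1 < z.re) : (moebius Ugen z).re < 0 := by
  rw [re_moebius_Ugen]
  exact div_neg_of_neg_of_pos (by linarith) (normSq_coe_add_one_pos z)

lemma neg_one_lt_re_moebius_Ugen {z : ℍ} (hz : 0 < z.re) : -1 < (moebius Ugen z).re := by
  rw [re_moebius_Ugen, neg_div, neg_lt_neg_iff, div_lt_one (normSq_coe_add_one_pos z),
    Complex.normSq_apply]
  have : 0 < z.im := z.im_pos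
  simp only [Complex.add_re, Complex.add_im, Complex.one_re, Complex.one_im, add_zero, coe_re,
    coe_im]
  nlinarith

lemma moebius_Ugen_ne_one : moebius Ugen ≠ 1 := by
  intro h
  have := re_moebius_Ugen_neg (z := (1 : ℝ) +ᵥ I) (by simp [vadd_re])
  rw [h] at this
  norm_num [vadd_re] at this

end GL2Z

namespace GL2ZPresentation

open GL2Z
open scoped Pointwise

abbrev G := PresentedGroup glRels

def u : G := .of 0
def s : G := .of 1
def r : G := .of 2

lemma s_pow_four : s ^ 4 = 1 := PresentedGroup.one_of_mem (by simp [glRels])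

lemma r_sq : r ^ 2 = 1 := PresentedGroup.one_of_mem (by simp [glRels])

lemma r_mul_s_mul_r_inv : r * s * r⁻¹ = s⁻¹ :=
  eq_inv_of_mul_eq_one_left (PresentedGroup.one_of_mem (by simp [glRels]))

lemma r_mul_u_mul_r_inv : r * u * r⁻¹ = u⁻¹ :=
  eq_inv_of_mul_eq_one_left (PresentedGroup.one_of_mem (by simp [glRels]))

lemma s_sq_eq_u_pow_three : s ^ 2 = u ^ 3 := by
  rw [← mul_inv_eq_one, ← inv_pow]
  exact PresentedGroup.one_of_mem (by simp [glRels])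

noncomputable def toGL2Z : G →* GL2Z := PresentedGroup.toGroup lift_genMap_eq_one_of_mem_glRels

lemma toGL2Z_u : toGL2Z u = Ugen := PresentedGroup.toGroup.of _

lemma toGL2Z_s : toGL2Z s = Sgen := PresentedGroup.toGroup.of _

lemma toGL2Z_r : toGL2Z r = Rgen := PresentedGroup.toGroup.of _

lemma s_sq_mem_center : s ^ 2 ∈ Subgroup.center G := by
  refine Subgroup.mem_center_iff.mpr fun g => Subgroup.mem_centralizer_singleton_iff.mp ?_
  refine PresentedGroup.generated_by _ _ (fun i => Subgroup.mem_centralizer_singleton_iff.mpr ?_) g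
  fin_cases i
  · change u * s ^ 2 = s ^ 2 * u
    rw [s_sq_eq_u_pow_three, ← pow_succ, ← pow_succ']
  · exact (Commute.self_pow s 2).eq
  · change r * s ^ 2 = s ^ 2 * r
    rw [← mul_inv_eq_iff_eq_mul, ← conj_pow, r_mul_s_mul_r_inv, inv_pow]
    exact inv_eq_of_mul_eq_one_right (by rw [← pow_add]; exact s_pow_four)

instance : (Subgroup.zpowers (s ^ 2)).Normal :=
  Subgroup.normal_zpowers_of_mem_center s_sq_mem_center

instance closure_u_s_normal : (Subgroup.closure {u, s}).Normal := by
  rw [← Subgroup.normalizer_eq_top_iff, eq_top_iff, ← PresentedGroup.closure_range_of,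
    Subgroup.closure_le]
  rintro _ ⟨i, rfl⟩
  fin_cases i
  · exact Subgroup.le_normalizer (Subgroup.subset_closure (by simp [u]))
  · exact Subgroup.le_normalizer (Subgroup.subset_closure (by simp [s]))
  · change r ∈ Subgroup.normalizer (Subgroup.closure {u, s} : Set G)
    rw [Subgroup.mem_normalizer_iff_map_conj_eq, MonoidHom.map_closure, ← Subgroup.closure_inv]
    congr 1
    simp [Set.image_pair, r_mul_u_mul_r_inv, r_mul_s_mul_r_inv, Set.inv_insert]

lemma closure_u_s_sup_zpowers_r : Subgroup.closure {u, s} ⊔ Subgroup.zpowers r = ⊤ := by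
  rw [eq_top_iff, ← PresentedGroup.closure_range_of, Subgroup.closure_le]
  rintro _ ⟨i, rfl⟩
  fin_cases i
  · exact Subgroup.mem_sup_left (Subgroup.subset_closure (by simp [u]))
  · exact Subgroup.mem_sup_left (Subgroup.subset_closure (by simp [s]))
  · exact Subgroup.mem_sup_right (Subgroup.mem_zpowers r)

lemma mem_closure_u_s_or_mul_r (g : G) :
    ∃ n ∈ Subgroup.closure {u, s}, g = n ∨ g = n * r := by
  have : g ∈ (↑(Subgroup.closure {u, s} ⊔ Subgroup.zpowers r) : Set G) := by
    rw [closure_u_s_sup_zpowers_r]; trivial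
  rw [Subgroup.normal_mul] at this
  obtain ⟨n, hn, w, hw, rfl⟩ := this
  rcases eq_one_or_eq_of_mem_zpowers_of_sq_eq_one r_sq hw with rfl | rfl
  · exact ⟨n, hn, .inl (mul_one n)⟩
  · exact ⟨n, hn, .inr rfl⟩

lemma closure_u_s_le_ker_det :
    Subgroup.closure {u, s} ≤ (GeneralLinearGroup.det.comp toGL2Z).ker := by
  rw [Subgroup.closure_le, Set.pair_subset_iff]
  constructor <;> ext <;> simp [toGL2Z_u, toGL2Z_s, Ugen, Sgen]

lemma ker_toGL2Z_le_closure_u_s : toGL2Z.ker ≤ Subgroup.closure {u, s} := by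
  intro g hg
  obtain ⟨n, hn, rfl | rfl⟩ := mem_closure_u_s_or_mul_r g
  · exact hn
  · have hdet := congrArg GeneralLinearGroup.det hg
    have hn' : GeneralLinearGroup.det (toGL2Z n) = 1 := closure_u_s_le_ker_det hn
    rw [map_mul, map_mul, toGL2Z_r, hn', one_mul, det_Rgen, map_one] at hdet
    exact absurd hdet (by decide)

lemma disjoint_ker_toGL2Z_zpowers_s_sq : Disjoint toGL2Z.ker (Subgroup.zpowers (s ^ 2)) := by
  refine Subgroup.disjoint_def.mpr fun {g} hker hg => ?_
  rcases eq_one_or_eq_of_mem_zpowers_of_sq_eq_one (by rw [← pow_mul]; exact s_pow_four) hg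
    with rfl | rfl
  · rfl
  · rw [MonoidHom.mem_ker, map_pow, toGL2Z_s, Sgen_sq] at hker
    exact absurd (congrArg (fun g : GL2Z => g 0 0) hker) (by simp)

abbrev Q := G ⧸ Subgroup.zpowers (s ^ 2)

noncomputable def moebiusQ : Q →* Equiv.Perm ℍ :=
  QuotientGroup.lift _ (moebius.comp toGL2Z)
    (Subgroup.zpowers_le.mpr (by simp [toGL2Z_s, Sgen_sq, moebius_neg_one]))

lemma moebiusQ_mk (g : G) : moebiusQ g = moebius (toGL2Z g) := rfl

lemma mk_s_sq : (s : Q) ^ 2 = 1 := (QuotientGroup.eq_one_iff _).mpr (Subgroup.mem_zpowers _)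

lemma mk_u_pow_three : (u : Q) ^ 3 = 1 := by
  rw [← QuotientGroup.mk_pow, ← s_sq_eq_u_pow_three, QuotientGroup.mk_pow, mk_s_sq]

lemma orderOf_mk_u : orderOf (u : Q) = 3 := by
  refine orderOf_eq_prime mk_u_pow_three fun h => moebius_Ugen_ne_one ?_
  simpa [moebiusQ_mk, toGL2Z_u] using congrArg moebiusQ h

def factor : Fin 2 → Subgroup Q := ![Subgroup.zpowers (s : Q), Subgroup.zpowers (u : Q)]

def pingPongSet : Fin 2 → Set ℍ := ![{z | 0 < z.re}, {z | z.re < 0}]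

lemma disjoint_pingPongSet : Disjoint (pingPongSet 0) (pingPongSet 1) :=
  Set.disjoint_left.mpr fun z (h0 : 0 < z.re) (h1 : z.re < 0) => lt_asymm h0 h1

lemma moebiusQ_smul_pingPongSet_one_subset {h : Q} (hs : h ∈ Subgroup.zpowers (s : Q))
    (h1 : h ≠ 1) : moebiusQ h • pingPongSet 1 ⊆ pingPongSet 0 := by
  rcases eq_one_or_eq_of_mem_zpowers_of_sq_eq_one mk_s_sq hs with rfl | rfl
  · exact absurd rfl h1
  · rw [Set.smul_set_subset_iff]
    intro z hz
    change 0 < (moebiusQ s z).re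
    rw [moebiusQ_mk, toGL2Z_s]
    exact re_moebius_Sgen_pos hz

lemma moebiusQ_smul_pingPongSet_zero_subset {h : Q} (hu : h ∈ Subgroup.zpowers (u : Q))
    (h1 : h ≠ 1) : moebiusQ h • pingPongSet 0 ⊆ pingPongSet 1 := by
  rw [Set.smul_set_subset_iff]
  intro z (hz : 0 < z.re)
  change (moebiusQ h z).re < 0
  rcases eq_one_or_eq_or_eq_sq_of_mem_zpowers_of_pow_three_eq_one mk_u_pow_three hu
    with rfl | rfl | rfl
  · exact absurd rfl h1
  · rw [moebiusQ_mk, toGL2Z_u]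
    exact re_moebius_Ugen_neg (by linarith)
  · rw [← QuotientGroup.mk_pow, moebiusQ_mk, map_pow, toGL2Z_u, map_pow, sq, Equiv.Perm.mul_apply]
    exact re_moebius_Ugen_neg (neg_one_lt_re_moebius_Ugen hz)

lemma injective_moebiusQ_comp_lift_factor :
    Function.Injective (moebiusQ.comp (Monoid.CoprodI.lift fun i => (factor i).subtype)) := by
  have hlift : moebiusQ.comp (Monoid.CoprodI.lift fun i => (factor i).subtype) =
      Monoid.CoprodI.lift fun i => moebiusQ.comp (factor i).subtype :=
    Monoid.CoprodI.ext_hom _ _ fun i => by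
      rw [MonoidHom.comp_assoc, Monoid.CoprodI.lift_comp_of, Monoid.CoprodI.lift_comp_of]
  rw [hlift]
  refine Monoid.CoprodI.lift_injective_of_ping_pong _ (.inr ⟨1, ?_⟩) pingPongSet ?_ ?_ ?_
  · have hcard : Nat.card (factor 1) = 3 := (Nat.card_zpowers (u : Q)).trans orderOf_mk_u
    have : Finite (factor 1) := Nat.finite_of_card_ne_zero (by rw [hcard]; norm_num)
    rw [← Nat.cast_card, hcard]; rfl
  · intro i
    fin_cases i
    · exact ⟨(1 : ℝ) +ᵥ I, by simp [pingPongSet, vadd_re]⟩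
    · exact ⟨(-1 : ℝ) +ᵥ I, by simp [pingPongSet, vadd_re]⟩
  · intro i j hij
    fin_cases i <;> fin_cases j <;> simp only [ne_eq, not_true_eq_false] at hij
    exacts [disjoint_pingPongSet, disjoint_pingPongSet.symm]
  · intro i j hij h hh
    fin_cases i <;> fin_cases j <;> simp only [ne_eq, not_true_eq_false] at hij
    · exact moebiusQ_smul_pingPongSet_one_subset h.2 (by simpa using hh)
    · exact moebiusQ_smul_pingPongSet_zero_subset h.2 (by simpa using hh)

lemma map_closure_u_s_le_range_lift_factor :
    (Subgroup.closure {u, s}).map (QuotientGroup.mk' _) ≤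
      (Monoid.CoprodI.lift fun i => (factor i).subtype).range := by
  rw [MonoidHom.map_closure, Subgroup.closure_le, Set.image_pair]
  exact Set.pair_subset
    ⟨Monoid.CoprodI.of (i := 1) ⟨u, Subgroup.mem_zpowers _⟩, by simp⟩
    ⟨Monoid.CoprodI.of (i := 0) ⟨s, Subgroup.mem_zpowers _⟩, by simp⟩

lemma toGL2Z_injective : Function.Injective toGL2Z := by
  refine (injective_iff_map_eq_one _).mpr fun g hg => ?_
  obtain ⟨w, hw⟩ :=
    map_closure_u_s_le_range_lift_factor ⟨g, ker_toGL2Z_le_closure_u_s hg, rfl⟩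
  have hw1 : w = 1 := injective_moebiusQ_comp_lift_factor (by simp [hw, moebiusQ_mk, hg])
  have hmk : (g : Q) = 1 := by rw [← QuotientGroup.mk'_apply, ← hw, hw1, map_one]
  exact Subgroup.disjoint_def.mp disjoint_ker_toGL2Z_zpowers_s_sq hg
    ((QuotientGroup.eq_one_iff g).mp hmk)

lemma toGL2Z_surjective : Function.Surjective toGL2Z := by
  rw [← MonoidHom.range_eq_top, eq_top_iff, ← closure_Ugen_Sgen_Rgen, Subgroup.closure_le]
  rintro _ (rfl | rfl | rfl)
  exacts [⟨u, toGL2Z_u⟩, ⟨s, toGL2Z_s⟩, ⟨r, toGL2Z_r⟩]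

end GL2ZPresentation

/-- `GL(2,ℤ)` has the presentation
`⟨u, s, r | s⁴ = 1, r² = 1, rsr⁻¹ = s⁻¹, rur⁻¹ = u⁻¹, s² = u³⟩`: the homomorphism from
the free group on `u, s, r` to `GL(2,ℤ)` sending `s ↦ S`, `u ↦ U`, `r ↦ R` kills the
normal closure of the relators, and the induced map from the presented group to
`GL(2,ℤ)` is an isomorphism. -/
theorem GL2Z_presentation :
    ∃ h : ∀ rel ∈ glRels, FreeGroup.lift genMap rel = 1,
      (∀ x ∈ Subgroup.normalClosure glRels, FreeGroup.lift genMap x = 1) ∧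
      Function.Bijective (PresentedGroup.toGroup h) :=
  ⟨GL2Z.lift_genMap_eq_one_of_mem_glRels,
    PresentedGroup.to_group_eq_one_of_mem_closure GL2Z.lift_genMap_eq_one_of_mem_glRels,
    GL2ZPresentation.toGL2Z_injective, GL2ZPresentation.toGL2Z_surjective⟩
end

section
/- The metaplectic group Mp(2,ℤ), defined by the presentation ⟨ŝ, û | ŝ⁸ = 1, ŝ² = û³⟩, is the amalgamated free product ℤ/8 ∗_{ℤ/4} ℤ/12: the presented group on generators ŝ, û with relators {ŝ⁸, ŝ²û⁻³} is isomorphic to the pushout of the two injective group homomorphisms ℤ/4 → ℤ/8 sending 1 ↦ 2 and ℤ/4 → ℤ/12 sending 1 ↦ 3, via an isomorphism carrying ŝ to the image of the generator 1 of ℤ/8 and û to the image of the generator 1 of ℤ/12. -/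
/-- The relators `{ŝ⁸, ŝ²û⁻³}` (with `ŝ = FreeGroup.of 0`, `û = FreeGroup.of 1`). -/
def mpRels : Set (FreeGroup (Fin 2)) :=
  {(FreeGroup.of 0) ^ 8, (FreeGroup.of 0) ^ 2 * ((FreeGroup.of 1)⁻¹) ^ 3}

/-- The metaplectic group `Mp(2,ℤ) = ⟨ŝ, û | ŝ⁸ = 1, ŝ² = û³⟩`. -/
abbrev Mp2Z := PresentedGroup mpRels

/-- The homomorphism `ℤ/4 → ℤ/8` sending `1 ↦ 2`. -/
def f48 : ZMod 4 →+ ZMod 8 :=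
  ZMod.lift 4 ⟨(Int.castAddHom (ZMod 8)).comp (AddMonoidHom.mulRight 2), by decide⟩

/-- The homomorphism `ℤ/4 → ℤ/12` sending `1 ↦ 3`. -/
def f412 : ZMod 4 →+ ZMod 12 :=
  ZMod.lift 4 ⟨(Int.castAddHom (ZMod 12)).comp (AddMonoidHom.mulRight 3), by decide⟩

/-- The two vertex groups of the amalgam, `ℤ/8` and `ℤ/12` (written multiplicatively). -/
def Gfam : Bool → Type
  | true => Multiplicative (ZMod 8)
  | false => Multiplicative (ZMod 12)

instance : (b : Bool) → Group (Gfam b)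
  | true => inferInstanceAs (Group (Multiplicative (ZMod 8)))
  | false => inferInstanceAs (Group (Multiplicative (ZMod 12)))

/-- The amalgamating homomorphisms `ℤ/4 → ℤ/8` (`1 ↦ 2`) and `ℤ/4 → ℤ/12` (`1 ↦ 3`). -/
def amalg : (b : Bool) → Multiplicative (ZMod 4) →* Gfam b
  | true =>
    show Multiplicative (ZMod 4) →* Multiplicative (ZMod 8) from AddMonoidHom.toMultiplicative f48
  | false =>
    show Multiplicative (ZMod 4) →* Multiplicative (ZMod 12) from
      AddMonoidHom.toMultiplicative f412

/-!
Both groups are generated by two elements subject to `s⁸ = 1` and `s² = u³`. In the pushout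
`s² = u³` holds because both sides are images of the generator of `ℤ/4`; in `Mp(2,ℤ)` the
relation `u¹² = (u³)⁴ = s⁸ = 1` shows that `s` and `u` define maps out of `ℤ/8` and `ℤ/12`
that agree on `ℤ/4`. The two universal properties then give homomorphisms in both directions,
and they are mutually inverse since they match the generators.
-/

section Cyclic

variable {G : Type*} [Group G] {n : ℕ}

def zmodPowersHom (g : G) (hg : g ^ n = 1) : Multiplicative (ZMod n) →* G :=
  AddMonoidHom.toMultiplicativeLeft <| ZMod.lift n
    ⟨zmultiplesHom (Additive G) (Additive.ofMul g), by
      rw [zmultiplesHom_apply, natCast_zsmul, ← ofMul_pow, hg, ofMul_one]⟩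

lemma zmodPowersHom_ofAdd_intCast (g : G) (hg : g ^ n = 1) (k : ℤ) :
    zmodPowersHom g hg (Multiplicative.ofAdd (k : ZMod n)) = g ^ k := by
  simp [zmodPowersHom, ZMod.lift_coe]

lemma zmodPowersHom_ofAdd_one (g : G) (hg : g ^ n = 1) :
    zmodPowersHom g hg (Multiplicative.ofAdd 1) = g := by
  simpa using zmodPowersHom_ofAdd_intCast g hg 1

lemma MonoidHom.ext_multiplicative_zmod {f f' : Multiplicative (ZMod n) →* G}
    (h : f (Multiplicative.ofAdd 1) = f' (Multiplicative.ofAdd 1)) : f = f' := by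
  refine MonoidHom.ext fun x => ?_
  obtain ⟨k, hk⟩ := ZMod.intCast_surjective (Multiplicative.toAdd x)
  have hx : x = Multiplicative.ofAdd (1 : ZMod n) ^ k := by
    rw [← ofAdd_zsmul, zsmul_one, hk, ofAdd_toAdd]
  rw [hx, map_zpow, map_zpow, h]

end Cyclic

instance : (b : Bool) → DecidableEq (Gfam b)
  | true => inferInstanceAs (DecidableEq (ZMod 8))
  | false => inferInstanceAs (DecidableEq (ZMod 12))

def Gfam.gen : (b : Bool) → Gfam b
  | true => Multiplicative.ofAdd (1 : ZMod 8)
  | false => Multiplicative.ofAdd (1 : ZMod 12)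

lemma Gfam.hom_ext {G : Type*} [Group G] {b : Bool} {f f' : Gfam b →* G}
    (h : f (Gfam.gen b) = f' (Gfam.gen b)) : f = f' := by
  cases b <;> exact MonoidHom.ext_multiplicative_zmod h

lemma amalg_true_ofAdd_one : amalg true (Multiplicative.ofAdd 1) = Gfam.gen true ^ 2 := by
  decide

lemma amalg_false_ofAdd_one : amalg false (Multiplicative.ofAdd 1) = Gfam.gen false ^ 3 := by
  decide

namespace Mp2Z

open Monoid.PushoutI

def s : Mp2Z := PresentedGroup.of 0

def u : Mp2Z := PresentedGroup.of 1

lemma s_pow_eight : s ^ 8 = 1 := by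
  simpa [s, PresentedGroup.of] using
    PresentedGroup.one_of_mem (rels := mpRels) (Set.mem_insert _ _)

lemma s_sq_eq_u_cube : s ^ 2 = u ^ 3 := by
  simpa [s, u, PresentedGroup.of, mul_inv_eq_one] using
    PresentedGroup.one_of_mem (rels := mpRels) (Set.mem_insert_of_mem _ rfl)

lemma u_pow_twelve : u ^ 12 = 1 := by
  rw [show 12 = 3 * 4 from rfl, pow_mul, ← s_sq_eq_u_cube, ← pow_mul, s_pow_eight]

def sPushout : Monoid.PushoutI amalg := of true (Gfam.gen true)

def uPushout : Monoid.PushoutI amalg := of false (Gfam.gen false)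

lemma sPushout_pow_eight : sPushout ^ 8 = 1 := by
  rw [sPushout, ← map_pow, show Gfam.gen true ^ 8 = 1 by decide, map_one]

lemma sPushout_sq_eq_uPushout_cube : sPushout ^ 2 = uPushout ^ 3 := by
  rw [sPushout, uPushout, ← map_pow, ← map_pow, ← amalg_true_ofAdd_one,
    ← amalg_false_ofAdd_one, of_apply_eq_base, of_apply_eq_base]

variable {G : Type*} [Group G]

def lift (x y : G) (hx : x ^ 8 = 1) (hxy : x ^ 2 = y ^ 3) : Mp2Z →* G :=
  PresentedGroup.toGroup (f := ![x, y]) <| by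
    rintro r (rfl | rfl)
    · simpa using hx
    · simp [hxy]

lemma lift_s (x y : G) (hx : x ^ 8 = 1) (hxy : x ^ 2 = y ^ 3) : lift x y hx hxy s = x :=
  PresentedGroup.toGroup.of _

lemma lift_u (x y : G) (hx : x ^ 8 = 1) (hxy : x ^ 2 = y ^ 3) : lift x y hx hxy u = y :=
  PresentedGroup.toGroup.of _

lemma hom_ext {f f' : Mp2Z →* G} (hs : f s = f' s) (hu : f u = f' u) : f = f' :=
  PresentedGroup.ext fun i => by fin_cases i <;> assumption

def toPushout : Mp2Z →* Monoid.PushoutI amalg :=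
  lift sPushout uPushout sPushout_pow_eight sPushout_sq_eq_uPushout_cube

def vertexHom : (b : Bool) → Gfam b →* Mp2Z
  | true => zmodPowersHom s s_pow_eight
  | false => zmodPowersHom u u_pow_twelve

lemma vertexHom_true_gen : vertexHom true (Gfam.gen true) = s :=
  zmodPowersHom_ofAdd_one s s_pow_eight

lemma vertexHom_false_gen : vertexHom false (Gfam.gen false) = u :=
  zmodPowersHom_ofAdd_one u u_pow_twelve

def baseHom : Multiplicative (ZMod 4) →* Mp2Z :=
  zmodPowersHom (s ^ 2) (by rw [← pow_mul, s_pow_eight])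

lemma vertexHom_comp_amalg (b : Bool) : (vertexHom b).comp (amalg b) = baseHom := by
  refine MonoidHom.ext_multiplicative_zmod ?_
  rw [MonoidHom.comp_apply, baseHom, zmodPowersHom_ofAdd_one]
  cases b
  · rw [amalg_false_ofAdd_one, map_pow, vertexHom_false_gen, s_sq_eq_u_cube]
  · rw [amalg_true_ofAdd_one, map_pow, vertexHom_true_gen]

def ofPushout : Monoid.PushoutI amalg →* Mp2Z :=
  Monoid.PushoutI.lift vertexHom baseHom vertexHom_comp_amalg

lemma ofPushout_comp_toPushout : ofPushout.comp toPushout = MonoidHom.id Mp2Z := by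
  refine hom_ext ?_ ?_
  · rw [MonoidHom.comp_apply, toPushout, lift_s, sPushout, ofPushout, lift_of,
      vertexHom_true_gen, MonoidHom.id_apply]
  · rw [MonoidHom.comp_apply, toPushout, lift_u, uPushout, ofPushout, lift_of,
      vertexHom_false_gen, MonoidHom.id_apply]

lemma toPushout_comp_ofPushout : toPushout.comp ofPushout = MonoidHom.id _ := by
  refine hom_ext_nonempty fun b => Gfam.hom_ext ?_
  simp only [MonoidHom.comp_apply, ofPushout, lift_of, MonoidHom.id_apply]
  cases b
  · rw [vertexHom_false_gen, toPushout, lift_u, uPushout]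
  · rw [vertexHom_true_gen, toPushout, lift_s, sPushout]

def mulEquivPushout : Mp2Z ≃* Monoid.PushoutI amalg :=
  toPushout.toMulEquiv ofPushout ofPushout_comp_toPushout toPushout_comp_ofPushout

lemma mulEquivPushout_s : mulEquivPushout s = sPushout :=
  lift_s _ _ sPushout_pow_eight sPushout_sq_eq_uPushout_cube

lemma mulEquivPushout_u : mulEquivPushout u = uPushout :=
  lift_u _ _ sPushout_pow_eight sPushout_sq_eq_uPushout_cube

end Mp2Z

/-- `Mp(2,ℤ) = ⟨ŝ, û | ŝ⁸ = 1, ŝ² = û³⟩ ≅ ℤ/8 ∗_{ℤ/4} ℤ/12`: the amalgamating maps are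
injective and send `1 ↦ 2` and `1 ↦ 3` respectively, and the presented group is
isomorphic to the pushout via an isomorphism carrying `ŝ` to the image of the generator
of `ℤ/8` and `û` to the image of the generator of `ℤ/12`. -/
theorem Mp2Z_amalgam :
    Function.Injective (amalg true) ∧
    Function.Injective (amalg false) ∧
    amalg true (Multiplicative.ofAdd (1 : ZMod 4)) = Multiplicative.ofAdd (2 : ZMod 8) ∧
    amalg false (Multiplicative.ofAdd (1 : ZMod 4)) = Multiplicative.ofAdd (3 : ZMod 12) ∧
    ∃ e : Mp2Z ≃* Monoid.PushoutI amalg,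
      e (PresentedGroup.of 0) =
        Monoid.PushoutI.of (φ := amalg) true (Multiplicative.ofAdd (1 : ZMod 8)) ∧
      e (PresentedGroup.of 1) =
        Monoid.PushoutI.of (φ := amalg) false (Multiplicative.ofAdd (1 : ZMod 12)) :=
  ⟨by decide, by decide, rfl, rfl, Mp2Z.mulEquivPushout,
    Mp2Z.mulEquivPushout_s, Mp2Z.mulEquivPushout_u⟩
end
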